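/- arXiv:2111.03570 — 6 statements merged into one kernel-verified Lean document; each statement's English description precedes it below -/
import Mathlib

section
/- For real-valued random variables X and Y, the expectation of |X - Y| equals the integral over all real t of P(X < t, Y ≥ t) + P(X ≥ t, Y < t) dt. -/
open MeasureTheory

theorem expectation_abs_sub_eq_integral_crossing_probs
    {Ω : Type*} [MeasurableSpace Ω] (P : Measure Ω) [IsProbabilityMeasure P]
    (X Y : Ω → ℝ) (hX : Measurable X) (hY : Measurable Y)
    (hXi : Integrable X P) (hYi : Integrable Y P) :
    ∫ ω, |X ω - Y ω| ∂P =
      ∫ t : ℝ, ((P {ω | X ω < t ∧ t ≤ Y ω}).toReal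
        + (P {ω | t ≤ X ω ∧ Y ω < t}).toReal) := by
  set s : Set (ℝ × Ω) := {p | X p.2 < p.1 ∧ p.1 ≤ Y p.2} with hs
  set u : Set (ℝ × Ω) := {p | p.1 ≤ X p.2 ∧ Y p.2 < p.1} with hu
  have hsm : MeasurableSet s :=
    (measurableSet_lt (hX.comp measurable_snd) measurable_fst).inter
      (measurableSet_le measurable_fst (hY.comp measurable_snd))
  have hum : MeasurableSet u :=
    (measurableSet_le measurable_fst (hX.comp measurable_snd)).inter
      (measurableSet_lt (hY.comp measurable_snd) measurable_fst)
  have hms : Measurable fun t : ℝ => P (Prod.mk t ⁻¹' s) :=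
    measurable_measure_prodMk_left hsm
  have hmu : Measurable fun t : ℝ => P (Prod.mk t ⁻¹' u) :=
    measurable_measure_prodMk_left hum
  have hslice_s : ∀ t : ℝ, Prod.mk t ⁻¹' s = {ω | X ω < t ∧ t ≤ Y ω} := fun t => rfl
  have hslice_u : ∀ t : ℝ, Prod.mk t ⁻¹' u = {ω | t ≤ X ω ∧ Y ω < t} := fun t => rfl
  have h1 : ∫⁻ t, P {ω | X ω < t ∧ t ≤ Y ω} = ∫⁻ ω, ENNReal.ofReal (Y ω - X ω) ∂P := by
    have := (Measure.prod_apply (μ := volume) (ν := P) hsm).symm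
    simp only [hslice_s] at this
    rw [this, Measure.prod_apply_symm hsm]
    congr 1
    ext ω
    have : (fun t : ℝ => (t, ω)) ⁻¹' s = Set.Ioc (X ω) (Y ω) := by
      ext t; simp [hs, Set.mem_Ioc]
    rw [this, Real.volume_Ioc]
  have h2 : ∫⁻ t, P {ω | t ≤ X ω ∧ Y ω < t} = ∫⁻ ω, ENNReal.ofReal (X ω - Y ω) ∂P := by
    have := (Measure.prod_apply (μ := volume) (ν := P) hum).symm
    simp only [hslice_u] at this
    rw [this, Measure.prod_apply_symm hum]
    congr 1
    ext ω
    have : (fun t : ℝ => (t, ω)) ⁻¹' u = Set.Ioc (Y ω) (X ω) := by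
      ext t; simp [hu, Set.mem_Ioc, and_comm]
    rw [this, Real.volume_Ioc]
  have hsum : ∀ ω, ENNReal.ofReal (Y ω - X ω) + ENNReal.ofReal (X ω - Y ω)
      = ENNReal.ofReal |X ω - Y ω| := by
    intro ω
    rcases le_total (X ω) (Y ω) with h | h
    · have h0 : ENNReal.ofReal (X ω - Y ω) = 0 := ENNReal.ofReal_of_nonpos (by linarith)
      rw [h0, abs_of_nonpos (by linarith), add_zero]
      congr 1; ring
    · have h0 : ENNReal.ofReal (Y ω - X ω) = 0 := ENNReal.ofReal_of_nonpos (by linarith)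
      rw [h0, abs_of_nonneg (by linarith), zero_add]
  have key : ∫⁻ t, (P {ω | X ω < t ∧ t ≤ Y ω} + P {ω | t ≤ X ω ∧ Y ω < t}) =
      ∫⁻ ω, ENNReal.ofReal |X ω - Y ω| ∂P := by
    rw [lintegral_add_left (by simpa only [hslice_s] using hms)]
    rw [h1, h2, ← lintegral_add_left (by
      exact ((hY.sub hX).ennreal_ofReal : Measurable fun ω => ENNReal.ofReal (Y ω - X ω)))]
    exact lintegral_congr hsum
  have hI : Integrable (fun ω => |X ω - Y ω|) P := (hXi.sub hYi).abs
  have hfin : ∫⁻ ω, ENNReal.ofReal |X ω - Y ω| ∂P ≠ ⊤ := by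
    have := hI.hasFiniteIntegral
    rw [hasFiniteIntegral_iff_ofReal (ae_of_all _ fun ω => abs_nonneg _)] at this
    exact this.ne
  have lhs : ∫ ω, |X ω - Y ω| ∂P = (∫⁻ ω, ENNReal.ofReal |X ω - Y ω| ∂P).toReal := by
    rw [integral_eq_lintegral_of_nonneg_ae (ae_of_all _ fun ω => abs_nonneg _)
      hI.aestronglyMeasurable]
  have rhs : ∫ t : ℝ, ((P {ω | X ω < t ∧ t ≤ Y ω}).toReal
        + (P {ω | t ≤ X ω ∧ Y ω < t}).toReal)
      = (∫⁻ t, (P {ω | X ω < t ∧ t ≤ Y ω} + P {ω | t ≤ X ω ∧ Y ω < t})).toReal := by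
    rw [← integral_toReal]
    · congr 1
      ext t
      exact (ENNReal.toReal_add (measure_ne_top _ _) (measure_ne_top _ _)).symm
    · exact ((by simpa only [hslice_s] using hms : Measurable fun t : ℝ =>
        P {ω | X ω < t ∧ t ≤ Y ω}).add
        (by simpa only [hslice_u] using hmu)).aemeasurable
    · exact ae_of_all _ fun t =>
        ENNReal.add_lt_top.2 ⟨measure_lt_top _ _, measure_lt_top _ _⟩
  rw [lhs, rhs, key]
end

section
/- For real-valued random variables X and Y with joint CDF F_{XY}(s,t) = P(X ≤ s, Y ≤ t) and marginal CDFs F_X, F_Y, the expectation E|X - Y| equals ∫_ℝ (F_X(t) + F_Y(t) - 2 F_{XY}(t,t)) dt. -/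
open MeasureTheory

lemma cdfKeySet_measurable (a b : ℝ) :
    MeasurableSet {t : ℝ | (a ≤ t ∧ t < b) ∨ (b ≤ t ∧ t < a)} := by
  simp only [Set.setOf_or]
  exact ((measurableSet_le measurable_const measurable_id).inter
      (measurableSet_lt measurable_id measurable_const)).union
    ((measurableSet_le measurable_const measurable_id).inter
      (measurableSet_lt measurable_id measurable_const))

lemma cdfKey (a b : ℝ) :
    ∫⁻ t : ℝ, ({t : ℝ | (a ≤ t ∧ t < b) ∨ (b ≤ t ∧ t < a)}).indicator 1 t
      = ENNReal.ofReal |a - b| := by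
  rw [lintegral_indicator_one (cdfKeySet_measurable a b)]
  rcases le_total a b with h | h
  · have hset : {t : ℝ | (a ≤ t ∧ t < b) ∨ (b ≤ t ∧ t < a)} = Set.Ico a b := by
      ext t
      constructor
      · rintro (⟨h1, h2⟩ | ⟨h1, h2⟩)
        · exact ⟨h1, h2⟩
        · exact absurd (lt_of_lt_of_le h2 h) (not_lt.2 h1)
      · rintro ⟨h1, h2⟩; exact Or.inl ⟨h1, h2⟩
    rw [hset, Real.volume_Ico, abs_sub_comm, abs_of_nonneg (sub_nonneg.2 h)]
  · have hset : {t : ℝ | (a ≤ t ∧ t < b) ∨ (b ≤ t ∧ t < a)} = Set.Ico b a := by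
      ext t
      constructor
      · rintro (⟨h1, h2⟩ | ⟨h1, h2⟩)
        · exact absurd (lt_of_lt_of_le h2 h) (not_lt.2 h1)
        · exact ⟨h1, h2⟩
      · rintro ⟨h1, h2⟩; exact Or.inr ⟨h1, h2⟩
    rw [hset, Real.volume_Ico, abs_of_nonneg (sub_nonneg.2 h)]

theorem expectation_abs_sub_eq_integral_cdfs
    {Ω : Type*} [MeasurableSpace Ω] (P : Measure Ω) [IsProbabilityMeasure P]
    (X Y : Ω → ℝ) (hX : Measurable X) (hY : Measurable Y)
    (hXi : Integrable X P) (hYi : Integrable Y P)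
    (FX FY : ℝ → ℝ) (FXY : ℝ → ℝ → ℝ)
    (hFX : ∀ t, FX t = (P {ω | X ω ≤ t}).toReal)
    (hFY : ∀ t, FY t = (P {ω | Y ω ≤ t}).toReal)
    (hFXY : ∀ s t, FXY s t = (P {ω | X ω ≤ s ∧ Y ω ≤ t}).toReal) :
    ∫ ω, |X ω - Y ω| ∂P = ∫ t : ℝ, (FX t + FY t - 2 * FXY t t) := by
  classical
  set S : Set (Ω × ℝ) :=
    {p | (X p.1 ≤ p.2 ∧ p.2 < Y p.1) ∨ (Y p.1 ≤ p.2 ∧ p.2 < X p.1)} with hSdef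
  have hSm : MeasurableSet S := by
    simp only [hSdef, Set.setOf_or]
    exact ((measurableSet_le (hX.comp measurable_fst) measurable_snd).inter
        (measurableSet_lt measurable_snd (hY.comp measurable_fst))).union
      ((measurableSet_le (hY.comp measurable_fst) measurable_snd).inter
        (measurableSet_lt measurable_snd (hX.comp measurable_fst)))
  set A : ℝ → Set Ω :=
    fun t => {ω | (X ω ≤ t ∧ t < Y ω) ∨ (Y ω ≤ t ∧ t < X ω)} with hAdef
  have hAm : ∀ t, MeasurableSet (A t) := by
    intro t
    simp only [hAdef, Set.setOf_or]
    exact ((measurableSet_le hX measurable_const).inter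
        (measurableSet_lt measurable_const hY)).union
      ((measurableSet_le hY measurable_const).inter
        (measurableSet_lt measurable_const hX))
  -- LHS as a lintegral
  have habs : Integrable (fun ω => |X ω - Y ω|) P := (hXi.sub hYi).abs
  have hL : ∫ ω, |X ω - Y ω| ∂P
      = (∫⁻ ω, ENNReal.ofReal |X ω - Y ω| ∂P).toReal := by
    rw [integral_eq_lintegral_of_nonneg_ae
      (Filter.Eventually.of_forall fun ω => abs_nonneg _)
      habs.aestronglyMeasurable]
  -- Tonelli
  have hind : Measurable (fun p : Ω × ℝ => S.indicator (1 : Ω × ℝ → ENNReal) p) :=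
    measurable_one.indicator hSm
  have hswap : ∫⁻ ω, ENNReal.ofReal |X ω - Y ω| ∂P
      = ∫⁻ t : ℝ, P (A t) := by
    have h1 : ∀ ω, ENNReal.ofReal |X ω - Y ω|
        = ∫⁻ t : ℝ, S.indicator (1 : Ω × ℝ → ENNReal) (ω, t) := by
      intro ω
      have : (fun t : ℝ => S.indicator (1 : Ω × ℝ → ENNReal) (ω, t))
          = fun t : ℝ => ({t : ℝ | (X ω ≤ t ∧ t < Y ω) ∨ (Y ω ≤ t ∧ t < X ω)}).indicator
              (1 : ℝ → ENNReal) t := by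
        funext t; rfl
      rw [this, cdfKey]
    have h2 : ∀ t : ℝ, ∫⁻ ω, S.indicator (1 : Ω × ℝ → ENNReal) (ω, t) ∂P = P (A t) := by
      intro t
      have : (fun ω => S.indicator (1 : Ω × ℝ → ENNReal) (ω, t))
          = fun ω => (A t).indicator (1 : Ω → ENNReal) ω := by
        funext ω; rfl
      rw [this, lintegral_indicator_one (hAm t)]
    calc ∫⁻ ω, ENNReal.ofReal |X ω - Y ω| ∂P
        = ∫⁻ ω, (∫⁻ t : ℝ, S.indicator (1 : Ω × ℝ → ENNReal) (ω, t)) ∂P := by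
          exact lintegral_congr h1
      _ = ∫⁻ t : ℝ, (∫⁻ ω, S.indicator (1 : Ω × ℝ → ENNReal) (ω, t) ∂P) := by
          exact lintegral_lintegral_swap
            (f := fun ω (t : ℝ) => S.indicator (1 : Ω × ℝ → ENNReal) (ω, t))
            hind.aemeasurable
      _ = ∫⁻ t : ℝ, P (A t) := lintegral_congr h2
  -- measurability of t ↦ P (A t)
  have hmeasA : Measurable (fun t : ℝ => P (A t)) := by
    have := measurable_measure_prodMk_right (μ := P) hSm
    exact this
  -- pointwise identity for the RHS integrand
  have hpt : ∀ t : ℝ, FX t + FY t - 2 * FXY t t = (P (A t)).toReal := by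
    intro t
    set B : Set Ω := {ω | X ω ≤ t ∧ t < Y ω} with hBdef
    set C : Set Ω := {ω | Y ω ≤ t ∧ t < X ω} with hCdef
    set D : Set Ω := {ω | X ω ≤ t ∧ Y ω ≤ t} with hDdef
    have hBm : MeasurableSet B :=
      (measurableSet_le hX measurable_const).inter (measurableSet_lt measurable_const hY)
    have hCm : MeasurableSet C :=
      (measurableSet_le hY measurable_const).inter (measurableSet_lt measurable_const hX)
    have hDm : MeasurableSet D :=
      (measurableSet_le hX measurable_const).inter (measurableSet_le hY measurable_const)
    have hPA : P (A t) = P B + P C := by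
      have hu : A t = B ∪ C := by
        ext ω; simp [hAdef, hBdef, hCdef, Set.mem_union]
      have hdisj : Disjoint B C := by
        rw [Set.disjoint_left]
        rintro ω ⟨h1, h2⟩ ⟨h3, h4⟩
        linarith
      rw [hu, measure_union hdisj hCm]
    have hPX : P {ω | X ω ≤ t} = P B + P D := by
      have hu : {ω | X ω ≤ t} = B ∪ D := by
        ext ω
        simp only [hBdef, hDdef, Set.mem_setOf_eq, Set.mem_union]
        constructor
        · intro h; rcases lt_or_ge t (Y ω) with h' | h'
          · exact Or.inl ⟨h, h'⟩
          · exact Or.inr ⟨h, h'⟩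
        · rintro (⟨h, _⟩ | ⟨h, _⟩) <;> exact h
      have hdisj : Disjoint B D := by
        rw [Set.disjoint_left]
        rintro ω ⟨_, h2⟩ ⟨_, h4⟩
        exact absurd h4 (not_le.2 h2)
      rw [hu, measure_union hdisj hDm]
    have hPY : P {ω | Y ω ≤ t} = P C + P D := by
      have hu : {ω | Y ω ≤ t} = C ∪ D := by
        ext ω
        simp only [hCdef, hDdef, Set.mem_setOf_eq, Set.mem_union]
        constructor
        · intro h; rcases lt_or_ge t (X ω) with h' | h'
          · exact Or.inl ⟨h, h'⟩
          · exact Or.inr ⟨h', h⟩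
        · rintro (⟨h, _⟩ | ⟨_, h⟩) <;> exact h
      have hdisj : Disjoint C D := by
        rw [Set.disjoint_left]
        rintro ω ⟨_, h2⟩ ⟨h3, _⟩
        exact absurd h3 (not_le.2 h2)
      rw [hu, measure_union hdisj hDm]
    have hBf : P B ≠ ⊤ := measure_ne_top P B
    have hCf : P C ≠ ⊤ := measure_ne_top P C
    have hDf : P D ≠ ⊤ := measure_ne_top P D
    rw [hFX, hFY, hFXY, hPX, hPY, hPA,
      ENNReal.toReal_add hBf hDf, ENNReal.toReal_add hCf hDf,
      ENNReal.toReal_add hBf hCf]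
    have : P {ω | X ω ≤ t ∧ Y ω ≤ t} = P D := rfl
    rw [this]
    ring
  -- RHS as lintegral
  have hR : ∫ t : ℝ, (FX t + FY t - 2 * FXY t t)
      = (∫⁻ t : ℝ, P (A t)).toReal := by
    have : (fun t : ℝ => FX t + FY t - 2 * FXY t t)
        = fun t : ℝ => (P (A t)).toReal := funext hpt
    rw [this]
    exact integral_toReal hmeasA.aemeasurable
      (Filter.Eventually.of_forall fun t => lt_of_le_of_lt prob_le_one
        (by norm_num : (1 : ENNReal) < ⊤))
  rw [hL, hswap, hR]
end

section
/- Let X and Y be integrable real random variables with marginal CDFs F_X and F_Y, and let F_{XY} be their joint CDF. Then ∫_ℝ (F_X(t) + F_Y(t) - 2 min(F_X(t), F_Y(t))) dt ≤ E|X - Y|. -/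
open MeasureTheory ENNReal

theorem integral_min_cdf_lower_bound
    {Ω : Type*} [MeasurableSpace Ω] (P : Measure Ω) [IsProbabilityMeasure P]
    (X Y : Ω → ℝ) (hX : Measurable X) (hY : Measurable Y)
    (hXi : Integrable X P) (hYi : Integrable Y P)
    (FX FY : ℝ → ℝ)
    (hFX : ∀ t, FX t = (P {ω | X ω ≤ t}).toReal)
    (hFY : ∀ t, FY t = (P {ω | Y ω ≤ t}).toReal) :
    ∫ t : ℝ, (FX t + FY t - 2 * min (FX t) (FY t)) ≤ ∫ ω, |X ω - Y ω| ∂P := by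
  classical
  set f : ℝ → ℝ := fun t => FX t + FY t - 2 * min (FX t) (FY t) with hfdef
  have hfeq : ∀ t, f t = |FX t - FY t| := by
    intro t
    simp only [hfdef]
    rcases le_total (FX t) (FY t) with h | h
    · rw [min_eq_left h, abs_of_nonpos (by linarith)]; ring
    · rw [min_eq_right h, abs_of_nonneg (by linarith)]; ring
  have hm : Measurable (fun ω => min (X ω) (Y ω)) := hX.min hY
  have hM : Measurable (fun ω => max (X ω) (Y ω)) := hX.max hY
  set A : ℝ → ℝ≥0∞ := fun t => P {ω | min (X ω) (Y ω) ≤ t} with hA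
  set B : ℝ → ℝ≥0∞ := fun t => P {ω | max (X ω) (Y ω) ≤ t} with hB
  -- pointwise bound
  have hpoint : ∀ t, ENNReal.ofReal (f t) ≤ A t - B t := by
    intro t
    have hBX : B t ≤ P {ω | X ω ≤ t} := by
      apply measure_mono; intro ω hω; simp only [Set.mem_setOf_eq] at *
      exact le_trans (le_max_left _ _) hω
    have hBY : B t ≤ P {ω | Y ω ≤ t} := by
      apply measure_mono; intro ω hω; simp only [Set.mem_setOf_eq] at *
      exact le_trans (le_max_right _ _) hω
    have hXA : P {ω | X ω ≤ t} ≤ A t := by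
      apply measure_mono; intro ω hω; simp only [Set.mem_setOf_eq] at *
      exact le_trans (min_le_left _ _) hω
    have hYA : P {ω | Y ω ≤ t} ≤ A t := by
      apply measure_mono; intro ω hω; simp only [Set.mem_setOf_eq] at *
      exact le_trans (min_le_right _ _) hω
    have hAne : A t ≠ ⊤ := measure_ne_top _ _
    have hfle : f t ≤ (A t).toReal - (B t).toReal := by
      rw [hfeq, hFX, hFY]
      have h1 := ENNReal.toReal_mono hAne hXA
      have h2 := ENNReal.toReal_mono hAne hYA
      have h3 := ENNReal.toReal_mono (measure_ne_top _ _) hBX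
      have h4 := ENNReal.toReal_mono (measure_ne_top _ _) hBY
      rw [abs_le]; constructor <;> linarith
    calc ENNReal.ofReal (f t) ≤ ENNReal.ofReal ((A t).toReal - (B t).toReal) :=
          ENNReal.ofReal_le_ofReal hfle
      _ = A t - B t := by
          rw [ENNReal.ofReal_sub _ ENNReal.toReal_nonneg,
            ENNReal.ofReal_toReal hAne, ENNReal.ofReal_toReal (measure_ne_top _ _)]
  -- set in product space
  set s : Set (ℝ × Ω) := {p | min (X p.2) (Y p.2) ≤ p.1 ∧ p.1 < max (X p.2) (Y p.2)} with hs
  have hsm : MeasurableSet s := by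
    apply MeasurableSet.inter
    · exact measurableSet_le (hm.comp measurable_snd) measurable_fst
    · exact measurableSet_lt measurable_fst (hM.comp measurable_snd)
  -- A t - B t = P (slice)
  have hslice : ∀ t : ℝ, A t - B t = P {ω | (t, ω) ∈ s} := by
    intro t
    have hsub : {ω | max (X ω) (Y ω) ≤ t} ⊆ {ω | min (X ω) (Y ω) ≤ t} := by
      intro ω hω; simp only [Set.mem_setOf_eq] at *
      exact le_trans min_le_max hω
    have hdiff : {ω | min (X ω) (Y ω) ≤ t} \ {ω | max (X ω) (Y ω) ≤ t}
        = {ω | (t, ω) ∈ s} := by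
      ext ω
      simp only [hs, Set.mem_diff, Set.mem_setOf_eq, not_le]
    rw [← hdiff]
    exact (measure_diff hsub (hM measurableSet_Iic).nullMeasurableSet
      (measure_ne_top _ _)).symm
  -- Tonelli
  have hton : ∫⁻ t : ℝ, (A t - B t) = ∫⁻ ω, ENNReal.ofReal (|X ω - Y ω|) ∂P := by
    have h1 : ∫⁻ t : ℝ, (A t - B t)
        = ∫⁻ t : ℝ, ∫⁻ ω, s.indicator 1 (t, ω) ∂P := by
      refine lintegral_congr fun t => ?_
      rw [hslice t]
      have hms : MeasurableSet {ω | (t, ω) ∈ s} := measurable_prodMk_left hsm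
      rw [← lintegral_indicator_one hms]
      refine lintegral_congr fun ω => ?_
      simp [Set.indicator_apply]
    have h2 : AEMeasurable (Function.uncurry fun (t : ℝ) (ω : Ω) => s.indicator (1 : ℝ × Ω → ℝ≥0∞) (t, ω))
        ((volume : Measure ℝ).prod P) := by
      have : (Function.uncurry fun (t : ℝ) (ω : Ω) => s.indicator (1 : ℝ × Ω → ℝ≥0∞) (t, ω))
          = s.indicator 1 := by ext p; simp [Function.uncurry]
      rw [this]
      exact (measurable_const.indicator hsm).aemeasurable
    rw [h1, lintegral_lintegral_swap h2]
    refine lintegral_congr fun ω => ?_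
    have h3 : ∫⁻ t : ℝ, s.indicator (1 : ℝ × Ω → ℝ≥0∞) (t, ω)
        = ∫⁻ t : ℝ, (Set.Ico (min (X ω) (Y ω)) (max (X ω) (Y ω))).indicator 1 t :=
      lintegral_congr fun t => by
        simp [Set.indicator_apply, hs, Set.mem_Ico, Set.mem_setOf_eq]
    rw [h3, lintegral_indicator_one measurableSet_Ico, Real.volume_Ico,
      max_sub_min_eq_abs, abs_sub_comm]
  -- finiteness and conclusion
  have hXYi : Integrable (fun ω => |X ω - Y ω|) P := (hXi.sub hYi).abs
  have hrhs : ∫ ω, |X ω - Y ω| ∂P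
      = (∫⁻ ω, ENNReal.ofReal (|X ω - Y ω|) ∂P).toReal := by
    rw [integral_eq_lintegral_of_nonneg_ae (Filter.Eventually.of_forall fun ω => abs_nonneg _)
      hXYi.aestronglyMeasurable]
  have hfin : ∫⁻ ω, ENNReal.ofReal (|X ω - Y ω|) ∂P ≠ ⊤ :=
    hXYi.lintegral_lt_top.ne
  -- measurability of f
  have hFXm : Measurable FX := by
    have : Monotone FX := by
      intro a b hab
      rw [hFX a, hFX b]
      exact ENNReal.toReal_mono (measure_ne_top _ _)
        (measure_mono fun ω hω => le_trans hω hab)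
    exact this.measurable
  have hFYm : Measurable FY := by
    have : Monotone FY := by
      intro a b hab
      rw [hFY a, hFY b]
      exact ENNReal.toReal_mono (measure_ne_top _ _)
        (measure_mono fun ω hω => le_trans hω hab)
    exact this.measurable
  have hfm : Measurable f := by
    apply Measurable.sub (hFXm.add hFYm)
    exact (hFXm.min hFYm).const_mul 2
  have hfnn : ∀ t, 0 ≤ f t := by
    intro t; rw [hfeq]; exact abs_nonneg _
  have hlhs : ∫ t : ℝ, f t = (∫⁻ t : ℝ, ENNReal.ofReal (f t)).toReal := by
    rw [integral_eq_lintegral_of_nonneg_ae (Filter.Eventually.of_forall hfnn)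
      hfm.aestronglyMeasurable]
  calc ∫ t : ℝ, f t = (∫⁻ t : ℝ, ENNReal.ofReal (f t)).toReal := hlhs
    _ ≤ (∫⁻ t : ℝ, (A t - B t)).toReal := by
        apply ENNReal.toReal_mono
        · rw [hton]; exact hfin
        · exact lintegral_mono hpoint
    _ = ∫ ω, |X ω - Y ω| ∂P := by rw [hton, ← hrhs]
end

section
/- Let μ and ν be probability measures on ℝ with finite first moments and quantile functions F_μ^{-1}, F_ν^{-1}. Then the 1-Wasserstein distance W₁(μ, ν) = inf over couplings π of ∫ |x - y| dπ(x,y) equals ∫₀¹ |F_μ^{-1}(u) - F_ν^{-1}(u)| du, and the infimum is attained by the comonotone coupling (F_μ^{-1}(U), F_ν^{-1}(U)) with U uniform on (0,1). -/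
open MeasureTheory

noncomputable def quantile (μ : Measure ℝ) (u : ℝ) : ℝ :=
  sInf {x : ℝ | u ≤ ProbabilityTheory.cdf μ x}

def IsCoupling (π : Measure (ℝ × ℝ)) (μ ν : Measure ℝ) : Prop :=
  IsProbabilityMeasure π ∧ π.map Prod.fst = μ ∧ π.map Prod.snd = ν

section Aux

open Set Filter ProbabilityTheory
open scoped Topology ENNReal
set_option linter.unusedSectionVars false

variable (μ : Measure ℝ) [IsProbabilityMeasure μ]

lemma quantile_set_nonempty {u : ℝ} (hu : u < 1) :
    {x : ℝ | u ≤ cdf μ x}.Nonempty :=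
  ((tendsto_cdf_atTop μ).eventually (eventually_ge_nhds hu)).exists

lemma quantile_set_bddBelow {u : ℝ} (hu : 0 < u) :
    BddBelow {x : ℝ | u ≤ cdf μ x} := by
  obtain ⟨x₀, hx₀⟩ := ((tendsto_cdf_atBot μ).eventually (eventually_lt_nhds hu)).exists
  refine ⟨x₀, fun x hx => ?_⟩
  by_contra h
  push_neg at h
  exact absurd (hx.trans ((cdf μ).mono h.le)) (not_le.2 hx₀)

lemma le_cdf_quantile {u : ℝ} (hu : u ∈ Set.Ioo (0:ℝ) 1) :
    u ≤ cdf μ (quantile μ u) := by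
  have hne := quantile_set_nonempty μ hu.2
  have hbdd := quantile_set_bddBelow μ hu.1
  have h1 : Tendsto (cdf μ) (𝓝[>] (quantile μ u)) (𝓝 (cdf μ (quantile μ u))) :=
    ((cdf μ).right_continuous _).mono_left (nhdsWithin_mono _ Ioi_subset_Ici_self)
  refine ge_of_tendsto h1 ?_
  refine eventually_nhdsWithin_of_forall (fun x hx => ?_)
  obtain ⟨s, hs, hsx⟩ := (csInf_lt_iff hbdd hne).mp hx
  exact hs.trans ((cdf μ).mono hsx.le)

lemma quantile_le_iff {u x : ℝ} (hu : u ∈ Set.Ioo (0:ℝ) 1) :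
    quantile μ u ≤ x ↔ u ≤ cdf μ x := by
  constructor
  · intro h
    exact (le_cdf_quantile μ hu).trans ((cdf μ).mono h)
  · intro h
    exact csInf_le (quantile_set_bddBelow μ hu.1) h

lemma quantile_monotoneOn : MonotoneOn (quantile μ) (Set.Ioo (0:ℝ) 1) := by
  intro u hu v hv huv
  exact csInf_le_csInf (quantile_set_bddBelow μ hu.1) (quantile_set_nonempty μ hv.2)
    (fun x hx => le_trans huv hx)

lemma quantile_aemeasurable :
    AEMeasurable (quantile μ) (volume.restrict (Set.Ioo (0:ℝ) 1)) :=
  aemeasurable_restrict_of_monotoneOn measurableSet_Ioo (quantile_monotoneOn μ)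

instance : IsProbabilityMeasure (volume.restrict (Set.Ioo (0:ℝ) 1)) :=
  ⟨by simp⟩

lemma map_quantile :
    (volume.restrict (Set.Ioo (0:ℝ) 1)).map (quantile μ) = μ := by
  haveI : IsProbabilityMeasure ((volume.restrict (Set.Ioo (0:ℝ) 1)).map (quantile μ)) :=
    Measure.isProbabilityMeasure_map (quantile_aemeasurable μ)
  refine Measure.ext_of_Iic _ _ (fun x => ?_)
  rw [Measure.map_apply_of_aemeasurable (quantile_aemeasurable μ) measurableSet_Iic,
    Measure.restrict_apply₀' measurableSet_Ioo.nullMeasurableSet]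
  have hset : quantile μ ⁻¹' (Iic x) ∩ Set.Ioo 0 1
      = {u : ℝ | u ≤ cdf μ x} ∩ Set.Ioo 0 1 := by
    ext u
    simp only [mem_inter_iff, mem_preimage, mem_Iic, mem_setOf_eq, and_congr_left_iff]
    exact fun hu => quantile_le_iff μ hu
  rw [hset, ← ofReal_cdf μ x]
  have h0 : (0:ℝ) ≤ cdf μ x := cdf_nonneg μ x
  rcases lt_or_ge (cdf μ x) 1 with h1 | h1
  · have : {u : ℝ | u ≤ cdf μ x} ∩ Set.Ioo 0 1 = Set.Ioc 0 (cdf μ x) := by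
      ext u
      simp only [mem_inter_iff, mem_setOf_eq, mem_Ioo, mem_Ioc]
      exact ⟨fun h => ⟨h.2.1, h.1⟩, fun h => ⟨h.2, h.1, lt_of_le_of_lt h.2 h1⟩⟩
    rw [this, Real.volume_Ioc, sub_zero]
  · have h1' : cdf μ x = 1 := le_antisymm (cdf_le_one μ x) h1
    have : {u : ℝ | u ≤ cdf μ x} ∩ Set.Ioo 0 1 = Set.Ioo 0 1 := by
      ext u
      simp only [mem_inter_iff, mem_setOf_eq, mem_Ioo, h1']
      exact ⟨fun h => h.2, fun h => ⟨h.2.le, h⟩⟩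
    rw [this, Real.volume_Ioo, h1', sub_zero]

def midSet (t : ℝ) : Set (ℝ × ℝ) := {p : ℝ × ℝ | min p.1 p.2 ≤ t ∧ t < max p.1 p.2}

lemma measurableSet_midSet (t : ℝ) : MeasurableSet (midSet t) :=
  (measurableSet_le (measurable_fst.min measurable_snd) measurable_const).inter
    (measurableSet_lt measurable_const (measurable_fst.max measurable_snd))

lemma layer_cake (π : Measure (ℝ × ℝ)) [IsProbabilityMeasure π] :
    ∫⁻ p : ℝ × ℝ, ENNReal.ofReal |p.1 - p.2| ∂π = ∫⁻ t : ℝ, π (midSet t) := by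
  have key : ∀ p : ℝ × ℝ, ENNReal.ofReal |p.1 - p.2|
      = ∫⁻ t : ℝ, (midSet t).indicator (1 : (ℝ × ℝ) → ℝ≥0∞) p := by
    intro p
    have h : ∀ t : ℝ, (midSet t).indicator (1 : (ℝ × ℝ) → ℝ≥0∞) p
        = (Set.Ico (min p.1 p.2) (max p.1 p.2)).indicator (1 : ℝ → ℝ≥0∞) t := by
      intro t
      by_cases h : p ∈ midSet t
      · rw [Set.indicator_of_mem h, Set.indicator_of_mem (Set.mem_Ico.mpr ⟨h.1, h.2⟩)]
        rfl
      · rw [Set.indicator_of_notMem h, Set.indicator_of_notMem]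
        exact fun hc => h ⟨(Set.mem_Ico.mp hc).1, (Set.mem_Ico.mp hc).2⟩
    simp_rw [h]
    rw [lintegral_indicator_one measurableSet_Ico, Real.volume_Ico, max_sub_min_eq_abs,
      abs_sub_comm]
  simp_rw [key]
  rw [lintegral_lintegral_swap]
  · congr 1
    ext t
    exact lintegral_indicator_one (measurableSet_midSet t)
  · have hs : MeasurableSet {x : (ℝ × ℝ) × ℝ | x.1 ∈ midSet x.2} :=
      (measurableSet_le (measurable_fst.fst.min measurable_fst.snd) measurable_snd).inter
        (measurableSet_lt measurable_snd (measurable_fst.fst.max measurable_fst.snd))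
    have heq : (Function.uncurry fun (p : ℝ × ℝ) (t : ℝ) =>
        (midSet t).indicator (1 : (ℝ × ℝ) → ℝ≥0∞) p)
        = {x : (ℝ × ℝ) × ℝ | x.1 ∈ midSet x.2}.indicator (1 : ((ℝ × ℝ) × ℝ) → ℝ≥0∞) := by
      ext x
      by_cases h : x.1 ∈ midSet x.2
      · rw [Set.indicator_of_mem (show x ∈ {x : (ℝ × ℝ) × ℝ | x.1 ∈ midSet x.2} from h)]
        simp [Function.uncurry, Set.indicator_of_mem h]
      · rw [Set.indicator_of_notMem (show x ∉ {x : (ℝ × ℝ) × ℝ | x.1 ∈ midSet x.2} from h)]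
        simp [Function.uncurry, Set.indicator_of_notMem h]
    rw [heq]
    exact (measurable_const.indicator hs).aemeasurable

lemma coupling_fst {π : Measure (ℝ × ℝ)} {μ ν : Measure ℝ} (h : IsCoupling π μ ν) (t : ℝ) :
    π {p : ℝ × ℝ | p.1 ≤ t} = μ (Set.Iic t) := by
  rw [← h.2.1, Measure.map_apply measurable_fst measurableSet_Iic]
  rfl

lemma coupling_snd {π : Measure (ℝ × ℝ)} {μ ν : Measure ℝ} (h : IsCoupling π μ ν) (t : ℝ) :
    π {p : ℝ × ℝ | p.2 ≤ t} = ν (Set.Iic t) := by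
  rw [← h.2.2, Measure.map_apply measurable_snd measurableSet_Iic]
  rfl

lemma midSet_lower {π : Measure (ℝ × ℝ)} {ν : Measure ℝ}
    [IsProbabilityMeasure μ] [IsProbabilityMeasure ν]
    (h : IsCoupling π μ ν) (t : ℝ) :
    ENNReal.ofReal |cdf μ t - cdf ν t| ≤ π (midSet t) := by
  rcases le_total (cdf ν t) (cdf μ t) with hle | hle
  · rw [abs_of_nonneg (by linarith), ENNReal.ofReal_sub _ (cdf_nonneg ν t),
      ofReal_cdf, ofReal_cdf, ← coupling_fst h t, ← coupling_snd h t]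
    rw [tsub_le_iff_right]
    have hincl : {p : ℝ × ℝ | p.1 ≤ t} ⊆ midSet t ∪ {p : ℝ × ℝ | p.2 ≤ t} := by
      intro p hp
      by_cases h2 : p.2 ≤ t
      · exact Or.inr h2
      · exact Or.inl ⟨min_le_of_left_le hp, lt_max_of_lt_right (not_le.mp h2)⟩
    exact (measure_mono hincl).trans (measure_union_le _ _)
  · rw [abs_of_nonpos (by linarith), neg_sub, ENNReal.ofReal_sub _ (cdf_nonneg μ t),
      ofReal_cdf, ofReal_cdf, ← coupling_fst h t, ← coupling_snd h t]
    rw [tsub_le_iff_right]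
    have hincl : {p : ℝ × ℝ | p.2 ≤ t} ⊆ midSet t ∪ {p : ℝ × ℝ | p.1 ≤ t} := by
      intro p hp
      by_cases h2 : p.1 ≤ t
      · exact Or.inr h2
      · exact Or.inl ⟨min_le_of_right_le hp, lt_max_of_lt_left (not_le.mp h2)⟩
    exact (measure_mono hincl).trans (measure_union_le _ _)

variable (ν : Measure ℝ) [IsProbabilityMeasure ν]

lemma pair_aemeasurable :
    AEMeasurable (fun u => (quantile μ u, quantile ν u)) (volume.restrict (Set.Ioo (0:ℝ) 1)) :=
  (quantile_aemeasurable μ).prodMk (quantile_aemeasurable ν)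

lemma comonotone_midSet (t : ℝ) :
    (Measure.map (fun u => (quantile μ u, quantile ν u)) (volume.restrict (Set.Ioo (0:ℝ) 1)))
      (midSet t) = ENNReal.ofReal |cdf μ t - cdf ν t| := by
  rw [Measure.map_apply_of_aemeasurable (pair_aemeasurable μ ν) (measurableSet_midSet t),
    Measure.restrict_apply₀' measurableSet_Ioo.nullMeasurableSet]
  set F := cdf μ t with hF
  set G := cdf ν t with hG
  have h0 : (0:ℝ) ≤ min F G := le_min (cdf_nonneg μ t) (cdf_nonneg ν t)
  have h1 : max F G ≤ 1 := max_le (cdf_le_one μ t) (cdf_le_one ν t)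
  have hset : (fun u => (quantile μ u, quantile ν u)) ⁻¹' midSet t ∩ Set.Ioo 0 1
      = Set.Ioc (min F G) (max F G) \ {1} := by
    ext u
    simp only [mem_inter_iff, mem_preimage, mem_Ioo, mem_diff, mem_Ioc, mem_singleton_iff]
    constructor
    · rintro ⟨⟨hmin, hmax⟩, hu⟩
      have hq1 : quantile μ u ≤ t ↔ u ≤ F := quantile_le_iff μ hu
      have hq2 : quantile ν u ≤ t ↔ u ≤ G := quantile_le_iff ν hu
      have hle : u ≤ max F G := by
        rcases min_le_iff.mp hmin with h | h
        · exact le_max_of_le_left (hq1.mp h)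
        · exact le_max_of_le_right (hq2.mp h)
      have hgt : min F G < u := by
        by_contra hc
        push_neg at hc
        exact absurd (max_le (hq1.mpr (hc.trans (min_le_left _ _)))
          (hq2.mpr (hc.trans (min_le_right _ _)))) (not_le.mpr hmax)
      exact ⟨⟨hgt, hle⟩, ne_of_lt hu.2⟩
    · rintro ⟨⟨hgt, hle⟩, hne⟩
      have hu : u ∈ Set.Ioo (0:ℝ) 1 :=
        ⟨lt_of_le_of_lt h0 hgt, lt_of_le_of_ne (hle.trans h1) hne⟩
      have hq1 : quantile μ u ≤ t ↔ u ≤ F := quantile_le_iff μ hu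
      have hq2 : quantile ν u ≤ t ↔ u ≤ G := quantile_le_iff ν hu
      refine ⟨⟨?_, ?_⟩, hu.1, hu.2⟩
      · rcases le_max_iff.mp hle with h | h
        · exact min_le_of_left_le (hq1.mpr h)
        · exact min_le_of_right_le (hq2.mpr h)
      · by_contra hc
        push_neg at hc
        have : u ≤ min F G := le_min (hq1.mp (le_of_max_le_left hc))
          (hq2.mp (le_of_max_le_right hc))
        exact absurd hgt (not_lt.mpr this)
  rw [hset, measure_diff_null (measure_singleton 1), Real.volume_Ioc, max_sub_min_eq_abs, abs_sub_comm]

lemma coupling_integrable {π : Measure (ℝ × ℝ)} (h : IsCoupling π μ ν)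
    (hμ : Integrable id μ) (hν : Integrable id ν) :
    Integrable (fun p : ℝ × ℝ => |p.1 - p.2|) π := by
  haveI := h.1
  have h1 : Integrable (fun p : ℝ × ℝ => p.1) π := by
    have := (integrable_map_measure aestronglyMeasurable_id measurable_fst.aemeasurable).mp
      (h.2.1.symm ▸ hμ)
    exact this
  have h2 : Integrable (fun p : ℝ × ℝ => p.2) π := by
    have := (integrable_map_measure aestronglyMeasurable_id measurable_snd.aemeasurable).mp
      (h.2.2.symm ▸ hν)
    exact this
  exact (h1.sub h2).abs

theorem wasserstein1_eq_integral_quantile_and_attained'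
    (hμ : Integrable id μ) (hν : Integrable id ν) :
    sInf {r : ℝ | ∃ π : Measure (ℝ × ℝ), IsCoupling π μ ν ∧
        r = ∫ p : ℝ × ℝ, |p.1 - p.2| ∂π}
      = ∫ u in Set.Ioo (0:ℝ) 1, |quantile μ u - quantile ν u| ∧
    IsCoupling
      (Measure.map (fun u => (quantile μ u, quantile ν u))
        (volume.restrict (Set.Ioo (0:ℝ) 1))) μ ν ∧
    ∫ p : ℝ × ℝ, |p.1 - p.2|
        ∂(Measure.map (fun u => (quantile μ u, quantile ν u))
          (volume.restrict (Set.Ioo (0:ℝ) 1)))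
      = ∫ u in Set.Ioo (0:ℝ) 1, |quantile μ u - quantile ν u| := by
  set π₀ := Measure.map (fun u => (quantile μ u, quantile ν u))
    (volume.restrict (Set.Ioo (0:ℝ) 1)) with hπ₀
  haveI hprob : IsProbabilityMeasure π₀ := Measure.isProbabilityMeasure_map (pair_aemeasurable μ ν)
  have hfst : π₀.map Prod.fst = μ := by
    rw [hπ₀, AEMeasurable.map_map_of_aemeasurable measurable_fst.aemeasurable
      (pair_aemeasurable μ ν)]
    exact map_quantile μ
  have hsnd : π₀.map Prod.snd = ν := by
    rw [hπ₀, AEMeasurable.map_map_of_aemeasurable measurable_snd.aemeasurable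
      (pair_aemeasurable μ ν)]
    exact map_quantile ν
  have hcoup : IsCoupling π₀ μ ν := ⟨hprob, hfst, hsnd⟩
  have hcont : Continuous (fun p : ℝ × ℝ => |p.1 - p.2|) :=
    (continuous_fst.sub continuous_snd).abs
  have h3 : ∫ p : ℝ × ℝ, |p.1 - p.2| ∂π₀
      = ∫ u in Set.Ioo (0:ℝ) 1, |quantile μ u - quantile ν u| := by
    rw [hπ₀, integral_map (pair_aemeasurable μ ν)
      (hcont.aestronglyMeasurable.mono_measure le_rfl)]
  refine ⟨?_, hcoup, h3⟩
  set V := ∫ u in Set.Ioo (0:ℝ) 1, |quantile μ u - quantile ν u| with hV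
  set S := {r : ℝ | ∃ π : Measure (ℝ × ℝ), IsCoupling π μ ν ∧
        r = ∫ p : ℝ × ℝ, |p.1 - p.2| ∂π} with hS
  have hmem : V ∈ S := ⟨π₀, hcoup, h3.symm⟩
  have hlow : ∀ r ∈ S, V ≤ r := by
    rintro r ⟨π, hπ, rfl⟩
    haveI := hπ.1
    have habs := coupling_integrable μ ν hπ hμ hν
    have habs₀ := coupling_integrable μ ν hcoup hμ hν
    have e1 : ENNReal.ofReal (∫ p : ℝ × ℝ, |p.1 - p.2| ∂π)
        = ∫⁻ p : ℝ × ℝ, ENNReal.ofReal |p.1 - p.2| ∂π :=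
      ofReal_integral_eq_lintegral_ofReal habs (ae_of_all _ fun p => abs_nonneg _)
    have e0 : ENNReal.ofReal (∫ p : ℝ × ℝ, |p.1 - p.2| ∂π₀)
        = ∫⁻ p : ℝ × ℝ, ENNReal.ofReal |p.1 - p.2| ∂π₀ :=
      ofReal_integral_eq_lintegral_ofReal habs₀ (ae_of_all _ fun p => abs_nonneg _)
    have chain : ENNReal.ofReal V ≤ ENNReal.ofReal (∫ p : ℝ × ℝ, |p.1 - p.2| ∂π) := by
      rw [e1, ← h3, e0, layer_cake π, layer_cake π₀]
      refine lintegral_mono (fun t => ?_)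
      rw [comonotone_midSet μ ν t]
      exact midSet_lower μ hπ t
    exact (ENNReal.ofReal_le_ofReal_iff (integral_nonneg (fun p => abs_nonneg _))).mp chain
  exact le_antisymm (csInf_le ⟨V, hlow⟩ hmem) (le_csInf ⟨V, hmem⟩ hlow)

end Aux

theorem wasserstein1_eq_integral_quantile_and_attained
    (μ ν : Measure ℝ) [IsProbabilityMeasure μ] [IsProbabilityMeasure ν]
    (hμ : Integrable id μ) (hν : Integrable id ν) :
    sInf {r : ℝ | ∃ π : Measure (ℝ × ℝ), IsCoupling π μ ν ∧
        r = ∫ p : ℝ × ℝ, |p.1 - p.2| ∂π}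
      = ∫ u in Set.Ioo (0:ℝ) 1, |quantile μ u - quantile ν u| ∧
    IsCoupling
      (Measure.map (fun u => (quantile μ u, quantile ν u))
        (volume.restrict (Set.Ioo (0:ℝ) 1))) μ ν ∧
    ∫ p : ℝ × ℝ, |p.1 - p.2|
        ∂(Measure.map (fun u => (quantile μ u, quantile ν u))
          (volume.restrict (Set.Ioo (0:ℝ) 1)))
      = ∫ u in Set.Ioo (0:ℝ) 1, |quantile μ u - quantile ν u| :=
  wasserstein1_eq_integral_quantile_and_attained' μ ν hμ hν
end

section
/- For probability measures μ and ν on ℝ with finite first moments, the 1-Wasserstein distance equals the L¹ distance between the CDFs: W₁(μ, ν) = ∫_ℝ |F_μ(t) - F_ν(t)| dt. -/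
/-! Both sides are integrals over thresholds `t` of the mass of the pairs separated by `t`: by
Fubini, `∫ |x - y| dπ = ∫ π {(x, y) | x ≤ t < y or y ≤ t < x} dt` for any coupling `π`, and the
integrand is at least `|F_μ(t) - F_ν(t)|`, the difference of the masses of `{x ≤ t}` and `{y ≤ t}`.
The quantile coupling `u ↦ (F_μ⁻¹(u), F_ν⁻¹(u))`, `u` uniform on `(0, 1)`, separates `(x, y)` by `t`
exactly when `u` lies between `F_μ(t)` and `F_ν(t)`, so it attains the bound. -/

open MeasureTheory

open Set
open scoped ENNReal symmDiff

lemma Set.Ici_symmDiff_Ici {α : Type*} [LinearOrder α] (a b : α) :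
    Ici a ∆ Ici b = Ico (min a b) (max a b) := by
  ext x
  simp only [mem_symmDiff, mem_Ici, mem_Ico, min_le_iff, lt_max_iff]
  grind

lemma Set.Iic_symmDiff_Iic {α : Type*} [LinearOrder α] (a b : α) :
    Iic a ∆ Iic b = Ioc (min a b) (max a b) := by
  ext x
  simp only [mem_symmDiff, mem_Iic, mem_Ioc, min_lt_iff, le_max_iff]
  grind

namespace MeasureTheory

variable {α : Type*} [MeasurableSpace α]

lemma lintegral_ofReal_abs_sub_eq_lintegral_measure_symmDiff (π : Measure α) [SFinite π]
    {f g : α → ℝ} (hf : Measurable f) (hg : Measurable g) :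
    ∫⁻ a, ENNReal.ofReal |f a - g a| ∂π = ∫⁻ t, π ({a | f a ≤ t} ∆ {a | g a ≤ t}) := by
  set T : Set (α × ℝ) := {q | f q.1 ≤ q.2} ∆ {q | g q.1 ≤ q.2}
  have hT : MeasurableSet T :=
    (measurableSet_le (hf.comp measurable_fst) measurable_snd).symmDiff
      (measurableSet_le (hg.comp measurable_fst) measurable_snd)
  calc ∫⁻ a, ENNReal.ofReal |f a - g a| ∂π = ∫⁻ a, volume (Prod.mk a ⁻¹' T) ∂π := by
        refine lintegral_congr fun a => ?_
        change _ = volume (Ici (f a) ∆ Ici (g a))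
        rw [Ici_symmDiff_Ici, Real.volume_Ico, max_sub_min_eq_abs']
    _ = π.prod volume T := (Measure.prod_apply hT).symm
    _ = ∫⁻ t, π ({a | f a ≤ t} ∆ {a | g a ≤ t}) := Measure.prod_apply_symm hT

lemma integral_abs_sub_eq_toReal_lintegral_measure_symmDiff (π : Measure α) [SFinite π]
    {f g : α → ℝ} (hf : Measurable f) (hg : Measurable g) :
    ∫ a, |f a - g a| ∂π = (∫⁻ t, π ({a | f a ≤ t} ∆ {a | g a ≤ t})).toReal := by
  rw [integral_eq_lintegral_of_nonneg_ae (f := fun a => |f a - g a|)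
    (ae_of_all _ fun _ => abs_nonneg _) (hf.sub hg).abs.aestronglyMeasurable,
    lintegral_ofReal_abs_sub_eq_lintegral_measure_symmDiff π hf hg]

lemma ofReal_abs_measureReal_sub_le_measure_symmDiff (μ : Measure α) [IsFiniteMeasure μ]
    (s t : Set α) : ENNReal.ofReal |μ.real s - μ.real t| ≤ μ (s ∆ t) := by
  have key : ∀ s t : Set α, ENNReal.ofReal (μ.real s - μ.real t) ≤ μ (s ∆ t) := fun s t => by
    rw [ENNReal.ofReal_sub _ measureReal_nonneg, ofReal_measureReal, ofReal_measureReal]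
    exact le_measure_symmDiff
  rw [abs_eq_max_neg, neg_sub, ENNReal.ofReal_max]
  exact max_le (key s t) (symmDiff_comm t s ▸ key t s)

lemma volume_restrict_Ioo_zero_one_Ioc {a b : ℝ} (ha : 0 ≤ a) (hb : b ≤ 1) :
    volume.restrict (Ioo 0 1) (Ioc a b) = ENNReal.ofReal (b - a) := by
  rw [Measure.restrict_congr_set Ioo_ae_eq_Ioc, Measure.restrict_apply measurableSet_Ioc,
    Ioc_inter_Ioc, max_eq_left ha, min_eq_left hb, Real.volume_Ioc]

instance : IsProbabilityMeasure (volume.restrict (Ioo (0 : ℝ) 1)) := ⟨by simp⟩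

end MeasureTheory

namespace ProbabilityTheory

/-- Meaningful only on `(0, 1)`: elsewhere the infimum is over an empty or unbounded set. -/
noncomputable def quantile (μ : Measure ℝ) (u : ℝ) : ℝ := sInf {x | u ≤ cdf μ x}

section Quantile

variable (μ : Measure ℝ) {u x : ℝ}

lemma nonempty_setOf_le_cdf (hu : u < 1) : {x | u ≤ cdf μ x}.Nonempty :=
  ((tendsto_cdf_atTop μ).eventually_const_le hu).exists

lemma bddBelow_setOf_le_cdf (hu : 0 < u) : BddBelow {x | u ≤ cdf μ x} := by
  obtain ⟨x₀, hx₀⟩ := ((tendsto_cdf_atBot μ).eventually_lt_const hu).exists_forall_of_atBot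
  exact ⟨x₀, fun x hx => le_of_not_gt fun hlt => (hx.trans_lt (hx₀ x hlt.le)).false⟩

lemma le_cdf_quantile (hu : u < 1) : u ≤ cdf μ (quantile μ u) := by
  have h_above : ∀ x ∈ Ioi (quantile μ u), u ≤ cdf μ x := fun x hx => by
    obtain ⟨y, hy, hyx⟩ := exists_lt_of_csInf_lt (nonempty_setOf_le_cdf μ hu) hx
    exact hy.trans (monotone_cdf μ hyx.le)
  exact ge_of_tendsto (((cdf μ).right_continuous _).mono Ioi_subset_Ici_self)
    (eventually_nhdsWithin_of_forall h_above)

lemma quantile_le_iff (hu₀ : 0 < u) (hu₁ : u < 1) : quantile μ u ≤ x ↔ u ≤ cdf μ x :=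
  ⟨fun h => (le_cdf_quantile μ hu₁).trans (monotone_cdf μ h),
    fun h => csInf_le (bddBelow_setOf_le_cdf μ hu₀) h⟩

lemma monotoneOn_quantile : MonotoneOn (quantile μ) (Ioo 0 1) := fun _ hu _ hv huv =>
  (quantile_le_iff μ hu.1 hu.2).2 (huv.trans (le_cdf_quantile μ hv.2))

lemma aemeasurable_quantile : AEMeasurable (quantile μ) (volume.restrict (Ioo 0 1)) :=
  aemeasurable_restrict_of_monotoneOn measurableSet_Ioo (monotoneOn_quantile μ)

end Quantile

lemma map_quantile (μ : Measure ℝ) [IsProbabilityMeasure μ] :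
    (volume.restrict (Ioo 0 1)).map (quantile μ) = μ := by
  refine Measure.ext_of_Iic _ _ fun x => ?_
  have hpre : quantile μ ⁻¹' Iic x ∩ Ioo 0 1 = Ioc 0 (cdf μ x) ∩ Ioo 0 1 := by
    ext u
    simp +contextual [quantile_le_iff]
  rw [Measure.map_apply_of_aemeasurable (aemeasurable_quantile μ) measurableSet_Iic,
    Measure.restrict_apply' measurableSet_Ioo, hpre, ← Measure.restrict_apply' measurableSet_Ioo,
    volume_restrict_Ioo_zero_one_Ioc le_rfl (cdf_le_one μ x), sub_zero, ofReal_cdf]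

lemma integral_abs_cdf_sub_eq_toReal_lintegral (μ ν : Measure ℝ) :
    ∫ t, |cdf μ t - cdf ν t| = (∫⁻ t, ENNReal.ofReal |cdf μ t - cdf ν t|).toReal :=
  integral_eq_lintegral_of_nonneg_ae (ae_of_all _ fun _ => abs_nonneg _)
    ((monotone_cdf μ).measurable.sub (monotone_cdf ν).measurable).abs.aestronglyMeasurable

noncomputable def quantileCoupling (μ ν : Measure ℝ) : Measure (ℝ × ℝ) :=
  (volume.restrict (Ioo 0 1)).map fun u => (quantile μ u, quantile ν u)

section QuantileCoupling

variable (μ ν : Measure ℝ)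

lemma aemeasurable_quantile_prodMk :
    AEMeasurable (fun u => (quantile μ u, quantile ν u)) (volume.restrict (Ioo 0 1)) :=
  (aemeasurable_quantile μ).prodMk (aemeasurable_quantile ν)

instance : IsProbabilityMeasure (quantileCoupling μ ν) :=
  Measure.isProbabilityMeasure_map (aemeasurable_quantile_prodMk μ ν)

lemma isCoupling_quantileCoupling [IsProbabilityMeasure μ] [IsProbabilityMeasure ν] :
    IsCoupling (quantileCoupling μ ν) μ ν := by
  have h := aemeasurable_quantile_prodMk μ ν
  refine ⟨inferInstance, ?_, ?_⟩
  · rw [quantileCoupling, AEMeasurable.map_map_of_aemeasurable measurable_fst.aemeasurable h]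
    exact map_quantile μ
  · rw [quantileCoupling, AEMeasurable.map_map_of_aemeasurable measurable_snd.aemeasurable h]
    exact map_quantile ν

lemma quantileCoupling_symmDiff (t : ℝ) :
    quantileCoupling μ ν ({p | p.1 ≤ t} ∆ {p | p.2 ≤ t}) = ENNReal.ofReal |cdf μ t - cdf ν t| := by
  have hS : MeasurableSet ({p : ℝ × ℝ | p.1 ≤ t} ∆ {p | p.2 ≤ t}) :=
    (measurableSet_le measurable_fst measurable_const).symmDiff
      (measurableSet_le measurable_snd measurable_const)
  have hpre : (fun u => (quantile μ u, quantile ν u)) ⁻¹' ({p | p.1 ≤ t} ∆ {p | p.2 ≤ t}) ∩ Ioo 0 1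
      = Ioc (min (cdf μ t) (cdf ν t)) (max (cdf μ t) (cdf ν t)) ∩ Ioo 0 1 := by
    rw [← Iic_symmDiff_Iic]
    ext u
    refine and_congr_left fun hu => ?_
    simp only [mem_preimage, mem_symmDiff, mem_ofPred_eq, mem_Iic, quantile_le_iff _ hu.1 hu.2]
  rw [quantileCoupling, Measure.map_apply_of_aemeasurable (aemeasurable_quantile_prodMk μ ν) hS,
    Measure.restrict_apply' measurableSet_Ioo, hpre, ← Measure.restrict_apply' measurableSet_Ioo,
    volume_restrict_Ioo_zero_one_Ioc (le_min (cdf_nonneg μ t) (cdf_nonneg ν t))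
      (max_le (cdf_le_one μ t) (cdf_le_one ν t)), max_sub_min_eq_abs']

lemma integral_abs_sub_quantileCoupling :
    ∫ p, |p.1 - p.2| ∂(quantileCoupling μ ν) = ∫ t, |cdf μ t - cdf ν t| := by
  rw [integral_abs_sub_eq_toReal_lintegral_measure_symmDiff _ measurable_fst measurable_snd,
    integral_abs_cdf_sub_eq_toReal_lintegral]
  simp_rw [quantileCoupling_symmDiff]

end QuantileCoupling

end ProbabilityTheory

open ProbabilityTheory

namespace IsCoupling

variable {π : Measure (ℝ × ℝ)} {μ ν : Measure ℝ}

lemma integrable_abs_sub (h : IsCoupling π μ ν) (hμ : Integrable id μ) (hν : Integrable id ν) :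
    Integrable (fun p : ℝ × ℝ => |p.1 - p.2|) π := by
  rw [← h.2.1] at hμ
  rw [← h.2.2] at hν
  exact ((hμ.comp_measurable measurable_fst).sub (hν.comp_measurable measurable_snd)).abs

lemma ofReal_abs_cdf_sub_le [IsProbabilityMeasure μ] [IsProbabilityMeasure ν]
    (h : IsCoupling π μ ν) (t : ℝ) :
    ENNReal.ofReal |cdf μ t - cdf ν t| ≤ π ({p | p.1 ≤ t} ∆ {p | p.2 ≤ t}) := by
  have := h.1
  have hμt : cdf μ t = π.real {p | p.1 ≤ t} := by
    rw [cdf_eq_real, ← h.2.1, map_measureReal_apply measurable_fst measurableSet_Iic]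
    rfl
  have hνt : cdf ν t = π.real {p | p.2 ≤ t} := by
    rw [cdf_eq_real, ← h.2.2, map_measureReal_apply measurable_snd measurableSet_Iic]
    rfl
  rw [hμt, hνt]
  exact ofReal_abs_measureReal_sub_le_measure_symmDiff π _ _

lemma integral_abs_cdf_sub_le [IsProbabilityMeasure μ] [IsProbabilityMeasure ν]
    (h : IsCoupling π μ ν) (hμ : Integrable id μ) (hν : Integrable id ν) :
    ∫ t, |cdf μ t - cdf ν t| ≤ ∫ p, |p.1 - p.2| ∂π := by
  have := h.1
  have h_fin : ∫⁻ t, π ({p | p.1 ≤ t} ∆ {p | p.2 ≤ t}) ≠ ∞ := by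
    rw [← lintegral_ofReal_abs_sub_eq_lintegral_measure_symmDiff π measurable_fst measurable_snd]
    exact (h.integrable_abs_sub hμ hν).lintegral_lt_top.ne
  rw [integral_abs_cdf_sub_eq_toReal_lintegral,
    integral_abs_sub_eq_toReal_lintegral_measure_symmDiff π measurable_fst measurable_snd]
  exact ENNReal.toReal_mono h_fin (lintegral_mono h.ofReal_abs_cdf_sub_le)

end IsCoupling

theorem wasserstein1_eq_integral_abs_cdf_sub
    (μ ν : Measure ℝ) [IsProbabilityMeasure μ] [IsProbabilityMeasure ν]
    (hμ : Integrable id μ) (hν : Integrable id ν) :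
    sInf {r : ℝ | ∃ π : Measure (ℝ × ℝ), IsCoupling π μ ν ∧
        r = ∫ p : ℝ × ℝ, |p.1 - p.2| ∂π}
      = ∫ t : ℝ, |ProbabilityTheory.cdf μ t - ProbabilityTheory.cdf ν t| := by
  refine IsLeast.csInf_eq ⟨⟨quantileCoupling μ ν, isCoupling_quantileCoupling μ ν,
    (integral_abs_sub_quantileCoupling μ ν).symm⟩, ?_⟩
  rintro _ ⟨π, hπ, rfl⟩
  exact hπ.integral_abs_cdf_sub_le hμ hν
end

section
/- Let X and Y be integrable real random variables. If the coupling of (X,Y) is comonotone (joint CDF min(F_X(s), F_Y(t))), then E|X - Y| ≤ E_π|X - Y| for every other coupling π of the same marginals. -/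
/-!
The distance `|x - y|` is the Lebesgue measure of the set of thresholds `t` that separate `x`
and `y`, so by Tonelli `E_π |X - Y| = ∫ π ({X ≤ t} ∆ {Y ≤ t}) dt`. For each `t`,
`π (A ∆ B) = π A + π B - 2 π (A ∩ B)`: the first two terms depend only on the marginals, and
`π {X ≤ t, Y ≤ t} ≤ min (F_X t) (F_Y t)` with equality for the comonotone coupling.
-/

open MeasureTheory

open Set
open scoped symmDiff

lemma Real.volume_Ici_symmDiff_Ici (x y : ℝ) :
    volume (Ici x ∆ Ici y) = ENNReal.ofReal |x - y| := by
  wlog hxy : x ≤ y generalizing x y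
  · rw [symmDiff_comm, abs_sub_comm]
    exact this y x (le_of_not_ge hxy)
  rw [symmDiff_of_ge (Ici_subset_Ici.2 hxy), Ici_sdiff_Ici, Real.volume_Ico, abs_sub_comm,
    abs_of_nonneg (sub_nonneg.2 hxy)]

namespace MeasureTheory

lemma measure_symmDiff_add_inter_add_inter {α : Type*} [MeasurableSpace α]
    (μ : Measure α) {s t : Set α} (hs : MeasurableSet s) (ht : MeasurableSet t) :
    μ (s ∆ t) + μ (s ∩ t) + μ (s ∩ t) = μ s + μ t := by
  have hst : (s ∪ t) ∩ (s ∩ t) = s ∩ t :=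
    inter_eq_right.2 (inter_subset_left.trans subset_union_left)
  rw [symmDiff_eq_sup_sdiff_inf]
  change μ ((s ∪ t) \ (s ∩ t)) + _ + _ = _
  have hdiff := measure_sdiff_add_inter (μ := μ) (s ∪ t) (hs.inter ht)
  rw [hst] at hdiff
  rw [hdiff, measure_union_add_inter _ ht]

lemma measure_symmDiff_le_of_measure_inter_le {α β : Type*} [MeasurableSpace α]
    [MeasurableSpace β] {μ : Measure α} {ν : Measure β} {s t : Set α} {s' t' : Set β}
    (hs : MeasurableSet s) (ht : MeasurableSet t) (hs' : MeasurableSet s') (ht' : MeasurableSet t')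
    (hss' : μ s = ν s') (htt' : μ t = ν t') (hinter : ν (s' ∩ t') ≤ μ (s ∩ t))
    (hfin : μ (s ∩ t) ≠ ⊤) : μ (s ∆ t) ≤ ν (s' ∆ t') := by
  refine ENNReal.le_of_add_le_add_right (a := μ (s ∩ t) + μ (s ∩ t)) (by finiteness) ?_
  calc μ (s ∆ t) + (μ (s ∩ t) + μ (s ∩ t)) = ν (s' ∆ t') + ν (s' ∩ t') + ν (s' ∩ t') := by
        rw [← add_assoc, measure_symmDiff_add_inter_add_inter μ hs ht,
          measure_symmDiff_add_inter_add_inter ν hs' ht', hss', htt']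
    _ ≤ ν (s' ∆ t') + (μ (s ∩ t) + μ (s ∩ t)) := by
        rw [add_assoc]; gcongr

lemma Measure.measure_prod_le_min_map_fst_map_snd {α β : Type*} [MeasurableSpace α]
    [MeasurableSpace β] (π : Measure (α × β)) (s : Set α) (t : Set β) :
    π (s ×ˢ t) ≤ min (π.map Prod.fst s) (π.map Prod.snd t) :=
  le_min ((measure_mono (prod_subset_preimage_fst s t)).trans
      (le_map_apply measurable_fst.aemeasurable s))
    ((measure_mono (prod_subset_preimage_snd s t)).trans
      (le_map_apply measurable_snd.aemeasurable t))

lemma lintegral_ofReal_abs_fst_sub_snd (π : Measure (ℝ × ℝ)) [SFinite π] :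
    ∫⁻ p, ENNReal.ofReal |p.1 - p.2| ∂π
      = ∫⁻ t, π ((Prod.fst ⁻¹' Iic t) ∆ (Prod.snd ⁻¹' Iic t)) := by
  set S : Set ((ℝ × ℝ) × ℝ) := {q | q.1.1 ≤ q.2} ∆ {q | q.1.2 ≤ q.2}
  have hS : MeasurableSet S :=
    (measurableSet_le (by fun_prop) (by fun_prop)).symmDiff
      (measurableSet_le (by fun_prop) (by fun_prop))
  calc ∫⁻ p, ENNReal.ofReal |p.1 - p.2| ∂π
      = ∫⁻ p, volume (Prod.mk p ⁻¹' S) ∂π := by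
        simp_rw [← Real.volume_Ici_symmDiff_Ici]; rfl
    _ = π.prod volume S := (Measure.prod_apply hS).symm
    _ = ∫⁻ t, π ((Prod.fst ⁻¹' Iic t) ∆ (Prod.snd ⁻¹' Iic t)) := by
        rw [Measure.prod_apply_symm hS]; rfl

lemma lintegral_ofReal_abs_fst_sub_snd_le {ρ π : Measure (ℝ × ℝ)} [IsFiniteMeasure ρ]
    [SFinite π] (hfst : ρ.map Prod.fst = π.map Prod.fst) (hsnd : ρ.map Prod.snd = π.map Prod.snd)
    (hdiag : ∀ t, π (Iic t ×ˢ Iic t) ≤ ρ (Iic t ×ˢ Iic t)) :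
    ∫⁻ p, ENNReal.ofReal |p.1 - p.2| ∂ρ ≤ ∫⁻ p, ENNReal.ofReal |p.1 - p.2| ∂π := by
  simp_rw [lintegral_ofReal_abs_fst_sub_snd]
  refine lintegral_mono fun t => ?_
  have hfst_t : MeasurableSet (Prod.fst ⁻¹' Iic t : Set (ℝ × ℝ)) :=
    measurable_fst measurableSet_Iic
  have hsnd_t : MeasurableSet (Prod.snd ⁻¹' Iic t : Set (ℝ × ℝ)) :=
    measurable_snd measurableSet_Iic
  refine measure_symmDiff_le_of_measure_inter_le hfst_t hsnd_t hfst_t hsnd_t ?_ ?_ ?_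
    (measure_ne_top _ _)
  · rw [← Measure.map_apply measurable_fst measurableSet_Iic, hfst,
      Measure.map_apply measurable_fst measurableSet_Iic]
  · rw [← Measure.map_apply measurable_snd measurableSet_Iic, hsnd,
      Measure.map_apply measurable_snd measurableSet_Iic]
  · simpa only [prod_eq] using hdiag t

lemma integrable_abs_fst_sub_snd {π : Measure (ℝ × ℝ)}
    (h1 : Integrable id (π.map Prod.fst)) (h2 : Integrable id (π.map Prod.snd)) :
    Integrable (fun p : ℝ × ℝ => |p.1 - p.2|) π :=
  ((h1.comp_measurable measurable_fst).sub (h2.comp_measurable measurable_snd)).abs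

lemma integral_abs_fst_sub_snd_le {ρ π : Measure (ℝ × ℝ)} [IsFiniteMeasure ρ]
    [SFinite π] (hπ : Integrable (fun p : ℝ × ℝ => |p.1 - p.2|) π)
    (hfst : ρ.map Prod.fst = π.map Prod.fst) (hsnd : ρ.map Prod.snd = π.map Prod.snd)
    (hdiag : ∀ t, π (Iic t ×ˢ Iic t) ≤ ρ (Iic t ×ˢ Iic t)) :
    ∫ p, |p.1 - p.2| ∂ρ ≤ ∫ p, |p.1 - p.2| ∂π := by
  rw [integral_eq_lintegral_of_nonneg_ae (ae_of_all _ fun _ => abs_nonneg _) (by fun_prop),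
    integral_eq_lintegral_of_nonneg_ae (ae_of_all _ fun _ => abs_nonneg _) (by fun_prop)]
  exact ENNReal.toReal_mono hπ.lintegral_lt_top.ne
    (lintegral_ofReal_abs_fst_sub_snd_le hfst hsnd hdiag)

end MeasureTheory

theorem comonotone_coupling_minimizes
    {Ω : Type*} [MeasurableSpace Ω] (P : Measure Ω) [IsProbabilityMeasure P]
    (X Y : Ω → ℝ) (hX : Measurable X) (hY : Measurable Y)
    (hXi : Integrable X P) (hYi : Integrable Y P)
    (hcom : ∀ s t : ℝ, (P {ω | X ω ≤ s ∧ Y ω ≤ t}).toReal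
      = min (ProbabilityTheory.cdf (Measure.map X P) s)
            (ProbabilityTheory.cdf (Measure.map Y P) t)) :
    ∀ π : Measure (ℝ × ℝ), IsCoupling π (Measure.map X P) (Measure.map Y P) →
      ∫ ω, |X ω - Y ω| ∂P ≤ ∫ p : ℝ × ℝ, |p.1 - p.2| ∂π := by
  rintro π ⟨_, hfst, hsnd⟩
  have := Measure.isProbabilityMeasure_map (μ := P) hX.aemeasurable
  have := Measure.isProbabilityMeasure_map (μ := P) hY.aemeasurable
  have hXY : Measurable fun ω => (X ω, Y ω) := hX.prodMk hY
  set ρ := P.map fun ω => (X ω, Y ω)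
  have hρfst : ρ.map Prod.fst = π.map Prod.fst := by
    rw [hfst, Measure.map_map measurable_fst hXY]; rfl
  have hρsnd : ρ.map Prod.snd = π.map Prod.snd := by
    rw [hsnd, Measure.map_map measurable_snd hXY]; rfl
  have hdiag (t : ℝ) : π (Iic t ×ˢ Iic t) ≤ ρ (Iic t ×ˢ Iic t) := calc
    π (Iic t ×ˢ Iic t) ≤ min (π.map Prod.fst (Iic t)) (π.map Prod.snd (Iic t)) :=
      π.measure_prod_le_min_map_fst_map_snd _ _
    _ = ENNReal.ofReal (P {ω | X ω ≤ t ∧ Y ω ≤ t}).toReal := by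
      rw [hcom, ENNReal.ofReal_min, ProbabilityTheory.ofReal_cdf, ProbabilityTheory.ofReal_cdf,
        hfst, hsnd]
    _ = ρ (Iic t ×ˢ Iic t) := by
      rw [ENNReal.ofReal_toReal (measure_ne_top _ _),
        Measure.map_apply hXY (measurableSet_Iic.prod measurableSet_Iic)]
      rfl
  have hπi : Integrable (fun p : ℝ × ℝ => |p.1 - p.2|) π :=
    integrable_abs_fst_sub_snd
      (hfst ▸ (integrable_map_measure aestronglyMeasurable_id hX.aemeasurable).2 hXi)
      (hsnd ▸ (integrable_map_measure aestronglyMeasurable_id hY.aemeasurable).2 hYi)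
  calc ∫ ω, |X ω - Y ω| ∂P = ∫ p, |p.1 - p.2| ∂ρ := by
        rw [integral_map hXY.aemeasurable (by fun_prop)]
    _ ≤ ∫ p, |p.1 - p.2| ∂π := integral_abs_fst_sub_snd_le hπi hρfst hρsnd hdiag
end
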